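/- arXiv:2210.03648 — 2 statements merged into one kernel-verified Lean document; each statement's English description precedes it below -/
import Mathlib

section
/- Let G be a Hausdorff topological gyrogroup and H a locally compact strongly L-subgyrogroup of G. If the quotient space G/H is a k-space (i.e. compactly generated: a subset is closed iff its intersection with every compact subspace is closed), then G is also a k-space. -/
universe u

/-- A gyrogroup: a groupoid with identity, inverses, gyroautomorphisms satisfying the
left gyroassociative law and the left loop property. -/
class Gyrogroup (G : Type u) where
  add : G → G → G
  zero : G
  neg : G → G
  gyr : G → G → G → G
  zero_add : ∀ x, add zero x = x
  add_zero : ∀ x, add x zero = x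
  neg_add : ∀ x, add (neg x) x = zero
  add_neg : ∀ x, add x (neg x) = zero
  gyr_bijective : ∀ a b, Function.Bijective (gyr a b)
  gyr_add : ∀ a b x y, gyr a b (add x y) = add (gyr a b x) (gyr a b y)
  gyrassoc : ∀ a b z, add a (add b z) = add (add a b) (gyr a b z)
  loop : ∀ a b, gyr (add a b) b = gyr a b

/-- A topological gyrogroup: the operation is jointly continuous and inversion is continuous. -/
class TopologicalGyrogroup (G : Type u) [TopologicalSpace G] [Gyrogroup G] : Prop where
  continuous_add : Continuous fun p : G × G => Gyrogroup.add p.1 p.2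
  continuous_neg : Continuous (Gyrogroup.neg : G → G)

/-- `H` is a subgyrogroup of `G` (by the subgyrogroup criterion: nonempty and closed
under the operation and inversion; this is equivalent to `(H, ⊕|H)` being itself a
gyrogroup whose gyroautomorphisms are the restrictions of those of `G`). -/
structure IsSubgyrogroup {G : Type u} [Gyrogroup G] (H : Set G) : Prop where
  nonempty : H.Nonempty
  add_mem : ∀ ⦃a⦄, a ∈ H → ∀ ⦃b⦄, b ∈ H → Gyrogroup.add a b ∈ H
  neg_mem : ∀ ⦃a⦄, a ∈ H → Gyrogroup.neg a ∈ H

/-- An `L`-subgyrogroup: a subgyrogroup with `gyr[a,h](H) = H` for all `a ∈ G`, `h ∈ H`. -/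
structure IsLSubgyrogroup {G : Type u} [Gyrogroup G] (H : Set G)
    extends IsSubgyrogroup H : Prop where
  gyr_image : ∀ (a : G), ∀ ⦃h⦄, h ∈ H → Gyrogroup.gyr a h '' H = H

/-- A strongly `L`-subgyrogroup: a subgyrogroup with `gyr[a,b](H) ⊆ H` for all `a, b ∈ G`. -/
structure IsStronglyLSubgyrogroup {G : Type u} [Gyrogroup G] (H : Set G)
    extends IsSubgyrogroup H : Prop where
  gyr_image_subset : ∀ a b : G, Gyrogroup.gyr a b '' H ⊆ H

/-- The pointwise sum `A ⊕ B = {a ⊕ b : a ∈ A, b ∈ B}` of two subsets. -/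
def setAdd {G : Type u} [Gyrogroup G] (A B : Set G) : Set G :=
  Set.image2 Gyrogroup.add A B

/-- The left coset `a ⊕ H = {a ⊕ h : h ∈ H}`. -/
def lCoset {G : Type u} [Gyrogroup G] (H : Set G) (a : G) : Set G :=
  (fun h => Gyrogroup.add a h) '' H

/-- The setoid on `G` identifying points with the same left coset modulo `H`. -/
def cosetSetoid {G : Type u} [Gyrogroup G] (H : Set G) : Setoid G :=
  ⟨fun x y => lCoset H x = lCoset H y,
   ⟨fun _ => rfl, fun h => h.symm, fun h₁ h₂ => h₁.trans h₂⟩⟩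

/-- The coset space `G/H`, carrying the quotient topology: a set `O ⊆ G/H` is open
iff `π⁻¹(O)` is open in `G`. -/
abbrev GyroQuot {G : Type u} [Gyrogroup G] (H : Set G) : Type u :=
  Quotient (cosetSetoid H)

/-- The natural quotient map `π : G → G/H`, `a ↦ a ⊕ H`. -/
def qmap {G : Type u} [Gyrogroup G] (H : Set G) (a : G) : GyroQuot H :=
  Quotient.mk (cosetSetoid H) a

/-- A k-space (compactly generated space): a subset is closed iff its intersection with
every compact subspace is closed in that subspace. -/
def IsKSpace (X : Type*) [TopologicalSpace X] : Prop :=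
  ∀ S : Set X, (∀ K : Set X, IsCompact K → IsClosed (Subtype.val ⁻¹' S : Set K)) →
    IsClosed S



set_option linter.unusedVariables false
set_option linter.unusedSectionVars false

section Stmt17Aux
open Topology

variable {G : Type u} [Gyrogroup G]

local infixl:65 " +ᵍ " => Gyrogroup.add
local prefix:100 "-ᵍ" => Gyrogroup.neg
local notation "◯" => Gyrogroup.zero
local notation "γ" => Gyrogroup.gyr

theorem gyr_inj (a b : G) : Function.Injective (γ a b) := (Gyrogroup.gyr_bijective a b).1

theorem gadd_left_inj (a : G) : Function.Injective (fun x : G => a +ᵍ x) := by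
  intro u v huv
  have h1 : -ᵍa +ᵍ (a +ᵍ u) = -ᵍa +ᵍ (a +ᵍ v) := by simp only at huv; rw [huv]
  rw [Gyrogroup.gyrassoc, Gyrogroup.gyrassoc, Gyrogroup.neg_add, Gyrogroup.zero_add,
    Gyrogroup.zero_add] at h1
  exact gyr_inj _ _ h1

theorem gyr_zero_left (a z : G) : γ ◯ a z = z := by
  have := Gyrogroup.gyrassoc ◯ a z
  rw [Gyrogroup.zero_add, Gyrogroup.zero_add] at this
  exact (gadd_left_inj a this.symm)

theorem gyr_neg_self (a z : G) : γ (-ᵍa) a z = z := by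
  have := Gyrogroup.loop (-ᵍa) a
  rw [Gyrogroup.neg_add] at this
  rw [← this, gyr_zero_left]

theorem left_cancel (a x : G) : -ᵍa +ᵍ (a +ᵍ x) = x := by
  rw [Gyrogroup.gyrassoc, Gyrogroup.neg_add, Gyrogroup.zero_add, gyr_neg_self]

theorem eq_neg_of_add_eq_zero {a y : G} (h : a +ᵍ y = ◯) : y = -ᵍa := by
  have h2 := left_cancel a y
  rw [h, Gyrogroup.add_zero] at h2
  exact h2.symm

theorem gneg_neg (a : G) : -ᵍ(-ᵍa) = a :=
  (eq_neg_of_add_eq_zero (Gyrogroup.neg_add a)).symm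

theorem left_cancel' (a x : G) : a +ᵍ (-ᵍa +ᵍ x) = x := by
  have := left_cancel (-ᵍa) x
  rwa [gneg_neg] at this

theorem gyr_self_neg (a z : G) : γ a (-ᵍa) z = z := by
  have := Gyrogroup.loop a (-ᵍa)
  rw [Gyrogroup.add_neg] at this
  rw [← this, gyr_zero_left]

theorem gyr_formula (a b z : G) : γ a b z = -ᵍ(a +ᵍ b) +ᵍ (a +ᵍ (b +ᵍ z)) := by
  rw [Gyrogroup.gyrassoc a b z, left_cancel]

theorem gyr_zero_right (a z : G) : γ a ◯ z = z := by
  rw [gyr_formula, Gyrogroup.add_zero, Gyrogroup.zero_add, left_cancel]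

theorem gyr_zero_arg (a b : G) : γ a b ◯ = ◯ := by
  rw [gyr_formula, Gyrogroup.add_zero, Gyrogroup.neg_add]

theorem gyr_neg_arg (a b z : G) : γ a b (-ᵍz) = -ᵍ(γ a b z) := by
  apply eq_neg_of_add_eq_zero
  rw [← Gyrogroup.gyr_add, Gyrogroup.add_neg, gyr_zero_arg]

/-- gyr[a,b]⁻¹ = gyr[-ᵍa, a⊕b] : composition one way. -/
theorem gyr_inv_comp (a b z : G) : γ a b (γ (-ᵍa) (a +ᵍ b) z) = z := by
  have h1 : γ (-ᵍa) (a +ᵍ b) z = -ᵍb +ᵍ (-ᵍa +ᵍ ((a +ᵍ b) +ᵍ z)) := by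
    rw [gyr_formula, left_cancel]
  rw [h1, gyr_formula, left_cancel', left_cancel', left_cancel]

theorem gyr_inv_comp' (a b z : G) : γ (-ᵍa) (a +ᵍ b) (γ a b z) = z := by
  apply gyr_inj a b
  rw [gyr_inv_comp]

theorem gyr_loop_var (a b z : G) : γ a (b +ᵍ a) z = γ (-ᵍb) (b +ᵍ a) z := by
  have := Gyrogroup.loop (-ᵍb) (b +ᵍ a)
  rw [left_cancel] at this
  rw [this]

/-- left Bol identity -/
theorem gyro_bol (a b z : G) : a +ᵍ (b +ᵍ (a +ᵍ z)) = (a +ᵍ (b +ᵍ a)) +ᵍ z := by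
  rw [Gyrogroup.gyrassoc b a z, Gyrogroup.gyrassoc a (b +ᵍ a) (γ b a z),
    gyr_loop_var, gyr_inv_comp']

/-- ★ identity: right cancellation with gyration -/
theorem gyro_star (c h : G) : (c +ᵍ h) +ᵍ γ (c +ᵍ h) h (-ᵍh) = c := by
  rw [Gyrogroup.loop]
  have := Gyrogroup.gyrassoc c h (-ᵍh)
  rw [Gyrogroup.add_neg, Gyrogroup.add_zero] at this
  exact this.symm

/-- right translations are surjective -/
theorem radd_surjective (a : G) : Function.Surjective (fun x : G => x +ᵍ a) := by
  intro b
  refine ⟨-ᵍa +ᵍ ((a +ᵍ b) +ᵍ -ᵍa), ?_⟩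
  have hb := gyro_bol (-ᵍa) (a +ᵍ b) (-ᵍ(-ᵍa))
  rw [gneg_neg, Gyrogroup.neg_add, Gyrogroup.add_zero] at hb
  simp only []
  rw [← hb, left_cancel]

def rsub (y a : G) : G := y +ᵍ γ y a (-ᵍa)

theorem rsub_radd (x a : G) : rsub (x +ᵍ a) a = x := gyro_star x a

theorem radd_rsub (y a : G) : rsub y a +ᵍ a = y := by
  obtain ⟨x, rfl⟩ := radd_surjective a y
  rw [rsub_radd]

theorem gyr_mem_H {H : Set G} (hH : IsStronglyLSubgyrogroup H) (a b : G) {h : G}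
    (hh : h ∈ H) : γ a b h ∈ H :=
  hH.gyr_image_subset a b ⟨h, hh, rfl⟩

theorem zero_mem_H {H : Set G} (hH : IsStronglyLSubgyrogroup H) : ◯ ∈ H := by
  obtain ⟨h, hh⟩ := hH.nonempty
  have := hH.add_mem (hH.neg_mem hh) hh
  rwa [Gyrogroup.neg_add] at this

/-- left gyrotranslation identity -/
theorem gyr_translate (a b c : G) :
    -ᵍ(a +ᵍ b) +ᵍ (a +ᵍ c) = γ a b (-ᵍb +ᵍ c) := by
  conv_lhs => rw [show a +ᵍ c = (a +ᵍ b) +ᵍ γ a b (-ᵍb +ᵍ c) by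
    rw [← Gyrogroup.gyrassoc, left_cancel']]
  rw [left_cancel]


variable {H : Set G}

theorem mem_lCoset_iff {x y : G} : y ∈ lCoset H x ↔ -ᵍx +ᵍ y ∈ H := by
  constructor
  · rintro ⟨h, hh, rfl⟩
    simpa [left_cancel] using hh
  · intro h
    exact ⟨_, h, left_cancel' x y⟩

theorem mem_lCoset_self (hH : IsStronglyLSubgyrogroup H) (x : G) : x ∈ lCoset H x :=
  ⟨Gyrogroup.zero, zero_mem_H hH, Gyrogroup.add_zero x⟩

theorem lCoset_symm (hH : IsStronglyLSubgyrogroup H) {x y : G} (h : y ∈ lCoset H x) :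
    x ∈ lCoset H y := by
  rw [mem_lCoset_iff] at h ⊢
  obtain ⟨h', hmem, rfl⟩ : ∃ h', h' ∈ H ∧ x +ᵍ h' = y := by
    exact ⟨_, h, left_cancel' x y⟩
  have : -ᵍ(x +ᵍ h') +ᵍ x = γ x h' (-ᵍh') := by
    have := gyr_translate x h' Gyrogroup.zero
    rwa [Gyrogroup.add_zero, Gyrogroup.add_zero] at this
  rw [this]
  exact gyr_mem_H hH _ _ (hH.neg_mem hmem)

theorem lCoset_eq_of_mem (hH : IsStronglyLSubgyrogroup H) {x y : G} (h : y ∈ lCoset H x) :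
    lCoset H x = lCoset H y := by
  have hxy : -ᵍx +ᵍ y ∈ H := mem_lCoset_iff.1 h
  have key : ∀ x' y' : G, -ᵍx' +ᵍ y' ∈ H → ∀ z, z ∈ lCoset H x' → z ∈ lCoset H y' := by
    intro x' y' hm z hz
    rw [mem_lCoset_iff] at hz ⊢
    have hy' : y' = x' +ᵍ (-ᵍx' +ᵍ y') := (left_cancel' x' y').symm
    have hz' : z = x' +ᵍ (-ᵍx' +ᵍ z) := (left_cancel' x' z).symm
    have hcalc : -ᵍy' +ᵍ z
        = γ x' (-ᵍx' +ᵍ y') (-ᵍ(-ᵍx' +ᵍ y') +ᵍ (-ᵍx' +ᵍ z)) := by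
      conv_lhs => rw [hy', hz']
      exact gyr_translate _ _ _
    rw [hcalc]
    exact gyr_mem_H hH _ _ (hH.add_mem (hH.neg_mem hm) hz)
  ext z
  constructor
  · exact key x y hxy z
  · exact key y x (mem_lCoset_iff.1 (lCoset_symm hH h)) z

theorem lCoset_eq_iff (hH : IsStronglyLSubgyrogroup H) {x y : G} :
    lCoset H x = lCoset H y ↔ y ∈ lCoset H x := by
  constructor
  · intro h
    rw [h]
    exact mem_lCoset_self hH y
  · exact lCoset_eq_of_mem hH

theorem qmap_eq_iff (hH : IsStronglyLSubgyrogroup H) {x y : G} :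
    qmap H x = qmap H y ↔ y ∈ lCoset H x := by
  rw [← lCoset_eq_iff hH]
  exact ⟨fun h => Quotient.exact h, fun h => Quotient.sound h⟩

theorem lCoset_zero (hH : IsStronglyLSubgyrogroup H) : lCoset H Gyrogroup.zero = H := by
  ext z
  rw [mem_lCoset_iff]
  constructor
  · intro h
    have : -ᵍ(Gyrogroup.zero : G) +ᵍ z = z := by
      have h0 : -ᵍ(Gyrogroup.zero : G) = Gyrogroup.zero := by
        have := eq_neg_of_add_eq_zero (Gyrogroup.zero_add (Gyrogroup.zero : G))
        exact this.symm
      rw [h0, Gyrogroup.zero_add]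
    rwa [this] at h
  · intro h
    have h0 : -ᵍ(Gyrogroup.zero : G) = Gyrogroup.zero := by
      have := eq_neg_of_add_eq_zero (Gyrogroup.zero_add (Gyrogroup.zero : G))
      exact this.symm
    rwa [h0, Gyrogroup.zero_add]



variable [TopologicalSpace G] [TopologicalGyrogroup G]

theorem cont_gadd : Continuous fun p : G × G => p.1 +ᵍ p.2 :=
  TopologicalGyrogroup.continuous_add

theorem cont_gneg : Continuous fun x : G => -ᵍx :=
  TopologicalGyrogroup.continuous_neg

theorem cgadd {X : Type*} [TopologicalSpace X] {f g : X → G} (hf : Continuous f)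
    (hg : Continuous g) : Continuous fun x => f x +ᵍ g x :=
  cont_gadd.comp (hf.prodMk hg)

theorem cgneg {X : Type*} [TopologicalSpace X] {f : X → G} (hf : Continuous f) :
    Continuous fun x => -ᵍ(f x) :=
  cont_gneg.comp hf

theorem cgyr {X : Type*} [TopologicalSpace X] {f g h : X → G} (hf : Continuous f)
    (hg : Continuous g) (hh : Continuous h) :
    Continuous fun x => γ (f x) (g x) (h x) := by
  have he : (fun x => γ (f x) (g x) (h x))
      = fun x => -ᵍ(f x +ᵍ g x) +ᵍ (f x +ᵍ (g x +ᵍ h x)) :=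
    funext fun x => gyr_formula _ _ _
  rw [he]
  exact cgadd (cgneg (cgadd hf hg)) (cgadd hf (cgadd hg hh))

/-- Left translation as a homeomorphism. -/
def lHomeo (a : G) : G ≃ₜ G where
  toFun := fun x => a +ᵍ x
  invFun := fun x => -ᵍa +ᵍ x
  left_inv := left_cancel a
  right_inv := left_cancel' a
  continuous_toFun := cgadd continuous_const continuous_id
  continuous_invFun := cgadd continuous_const continuous_id

/-- Right translation as a homeomorphism. -/
def rHomeo (a : G) : G ≃ₜ G where
  toFun := fun x => x +ᵍ a
  invFun := fun y => rsub y a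
  left_inv := fun x => rsub_radd x a
  right_inv := fun y => radd_rsub y a
  continuous_toFun := cgadd continuous_id continuous_const
  continuous_invFun := by
    unfold rsub
    exact cgadd continuous_id (cgyr continuous_id continuous_const continuous_const)

variable (H)

theorem cont_qmap : Continuous (qmap H) := continuous_quotient_mk'

theorem qmap_surj : Function.Surjective (qmap H) := fun q => ⟨q.out, q.out_eq⟩

theorem quotmap_qmap : IsQuotientMap (qmap H) := isQuotientMap_quotient_mk'

variable {H}

theorem qmap_preimage_image (hH : IsStronglyLSubgyrogroup H) (O : Set G) :
    qmap H ⁻¹' (qmap H '' O) = ⋃ h ∈ H, (fun x => x +ᵍ h) ⁻¹' O := by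
  ext x
  simp only [Set.mem_preimage, Set.mem_image, Set.mem_iUnion]
  constructor
  · rintro ⟨o, ho, heq⟩
    obtain ⟨h, hh, hx⟩ := lCoset_symm hH ((qmap_eq_iff hH).1 heq)
    refine ⟨h, hh, ?_⟩
    rw [← hx] at ho
    exact ho
  · rintro ⟨h, hh, hxh⟩
    exact ⟨x +ᵍ h, hxh, ((qmap_eq_iff hH).2 ⟨h, hh, rfl⟩).symm⟩

theorem isOpenMap_qmap (hH : IsStronglyLSubgyrogroup H) : IsOpenMap (qmap H) := by
  intro O hO
  rw [← (quotmap_qmap H).isOpen_preimage, qmap_preimage_image hH]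
  exact isOpen_biUnion fun h _ => hO.preimage (cgadd continuous_id continuous_const)

theorem t2_gyroquot (hH : IsStronglyLSubgyrogroup H) (hHc : IsClosed H) :
    T2Space (GyroQuot H) := by
  constructor
  intro q1 q2 hne
  obtain ⟨x, rfl⟩ := qmap_surj H q1
  obtain ⟨y, rfl⟩ := qmap_surj H q2
  have hxy : -ᵍx +ᵍ y ∈ Hᶜ := fun hmem =>
    hne ((qmap_eq_iff hH).2 (mem_lCoset_iff.2 hmem))
  have hcont : Continuous fun p : G × G => -ᵍp.1 +ᵍ p.2 :=
    cgadd (cgneg continuous_fst) continuous_snd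
  have hopen : IsOpen ((fun p : G × G => -ᵍp.1 +ᵍ p.2) ⁻¹' Hᶜ) :=
    hHc.isOpen_compl.preimage hcont
  obtain ⟨U, V, hU, hV, hxU, hyV, hsub⟩ := isOpen_prod_iff.1 hopen x y hxy
  refine ⟨qmap H '' U, qmap H '' V, isOpenMap_qmap hH U hU, isOpenMap_qmap hH V hV,
    ⟨x, hxU, rfl⟩, ⟨y, hyV, rfl⟩, ?_⟩
  rw [Set.disjoint_left]
  rintro q ⟨u, hu, rfl⟩ ⟨v, hv, hq⟩
  have hvu : v ∈ lCoset H u := lCoset_symm hH ((qmap_eq_iff hH).1 hq)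
  exact hsub (Set.mk_mem_prod hu hv) (mem_lCoset_iff.1 hvu)



variable [T2Space G]

theorem gneg_zero : -ᵍ(Gyrogroup.zero : G) = Gyrogroup.zero :=
  (eq_neg_of_add_eq_zero (Gyrogroup.zero_add (Gyrogroup.zero : G))).symm

theorem mem_setAdd {A B : Set G} {z : G} :
    z ∈ setAdd A B ↔ ∃ a ∈ A, ∃ b ∈ B, a +ᵍ b = z := by
  simp [setAdd, Set.mem_image2]

theorem isClosed_lCoset (hHc : IsClosed H) (a : G) : IsClosed (lCoset H a) := by
  have : lCoset H a = (lHomeo a) '' H := rfl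
  rw [this]
  exact (lHomeo a).isClosedMap H hHc

theorem exists_compact_nbhd (hH : IsStronglyLSubgyrogroup H)
    (hlc : LocallyCompactSpace H) :
    ∃ K U₀ : Set G, K ⊆ H ∧ IsCompact K ∧ IsOpen U₀ ∧ Gyrogroup.zero ∈ U₀ ∧
      U₀ ∩ H ⊆ K := by
  set z : H := ⟨Gyrogroup.zero, zero_mem_H hH⟩ with hz
  obtain ⟨T, hTn, -, hTc⟩ :=
    LocallyCompactSpace.local_compact_nhds z Set.univ Filter.univ_mem
  rw [nhds_subtype_eq_comap, Filter.mem_comap] at hTn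
  obtain ⟨U, hU, hUT⟩ := hTn
  obtain ⟨U₀, hU₀U, hU₀o, h0U₀⟩ := mem_nhds_iff.1 hU
  refine ⟨Subtype.val '' T, U₀, ?_, hTc.image continuous_subtype_val, hU₀o, h0U₀, ?_⟩
  · rintro x ⟨t, -, rfl⟩
    exact t.2
  · rintro x ⟨hx1, hx2⟩
    exact ⟨⟨x, hx2⟩, hUT (hU₀U hx1), rfl⟩

theorem isClosed_of_locallyCompact (hH : IsStronglyLSubgyrogroup H)
    (hlc : LocallyCompactSpace H) : IsClosed H := by
  obtain ⟨K, U₀, hKH, hKc, hU₀o, h0U₀, hUK⟩ := exists_compact_nbhd hH hlc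
  rw [← closure_subset_iff_isClosed]
  intro x hx
  have hc : Continuous fun u : G => -ᵍu +ᵍ x := cgadd (cgneg continuous_id) continuous_const
  have hval : -ᵍx +ᵍ x ∈ U₀ := by rw [Gyrogroup.neg_add]; exact h0U₀
  have hop : IsOpen ((fun u : G => -ᵍu +ᵍ x) ⁻¹' U₀) := hU₀o.preimage hc
  obtain ⟨h₀, hh₀W, hh₀H⟩ :
      ∃ h₀, h₀ ∈ (fun u : G => -ᵍu +ᵍ x) ⁻¹' U₀ ∧ h₀ ∈ H := by
    obtain ⟨h₀, h1, h2⟩ := (mem_closure_iff.1 hx) _ hop hval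
    exact ⟨h₀, h1, h2⟩
  set δ := -ᵍh₀ +ᵍ x with hδ
  have hδU₀ : δ ∈ U₀ := hh₀W
  have hδcl : δ ∈ closure H := by
    have h1 : lCoset H (-ᵍh₀) = H := by
      have hm : (-ᵍh₀) ∈ lCoset H Gyrogroup.zero := by
        rw [lCoset_zero hH]; exact hH.neg_mem hh₀H
      have := lCoset_eq_of_mem hH hm
      rw [lCoset_zero hH] at this
      exact this.symm
    have h2 : δ ∈ (lHomeo (-ᵍh₀)) '' closure H := ⟨x, hx, rfl⟩
    rw [(lHomeo (-ᵍh₀)).image_closure] at h2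
    have h3 : (lHomeo (-ᵍh₀)) '' H = lCoset H (-ᵍh₀) := rfl
    rw [h3, h1] at h2
    exact h2
  have hδK : δ ∈ K := by
    have hmem : δ ∈ closure (H ∩ U₀) := by
      rw [mem_closure_iff]
      intro o ho hδo
      obtain ⟨y, hy1, hy2⟩ := (mem_closure_iff.1 hδcl) (o ∩ U₀) (ho.inter hU₀o) ⟨hδo, hδU₀⟩
      exact ⟨y, hy1.1, hy2, hy1.2⟩
    have hsub : H ∩ U₀ ⊆ K := fun y hy => hUK ⟨hy.2, hy.1⟩
    exact closure_minimal hsub hKc.isClosed hmem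
  have hxe : x = h₀ +ᵍ δ := (left_cancel' h₀ x).symm
  rw [hxe]
  exact hH.add_mem hh₀H (hKH hδK)

theorem exists_closure_subset {W : Set G} (hWo : IsOpen W) (h0W : Gyrogroup.zero ∈ W) :
    ∃ V : Set G, IsOpen V ∧ Gyrogroup.zero ∈ V ∧ closure V ⊆ W := by
  have hψ : Continuous fun p : G × G => p.1 +ᵍ γ p.1 p.2 (-ᵍp.2) :=
    cgadd continuous_fst (cgyr continuous_fst continuous_snd (cgneg continuous_snd))
  have hval : (Gyrogroup.zero : G) +ᵍ γ Gyrogroup.zero Gyrogroup.zero (-ᵍGyrogroup.zero) ∈ W := by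
    rw [gyr_zero_left, gneg_zero, Gyrogroup.zero_add]
    exact h0W
  have hop : IsOpen ((fun p : G × G => p.1 +ᵍ γ p.1 p.2 (-ᵍp.2)) ⁻¹' W) := hWo.preimage hψ
  obtain ⟨V, W₁, hVo, hW₁o, h0V, h0W₁, hsub⟩ := isOpen_prod_iff.1 hop _ _ hval
  refine ⟨V, hVo, h0V, ?_⟩
  intro x hxV
  have hnb : IsOpen ((lHomeo x) '' W₁) := (lHomeo x).isOpenMap W₁ hW₁o
  have hxnb : x ∈ (lHomeo x) '' W₁ := ⟨Gyrogroup.zero, h0W₁, Gyrogroup.add_zero x⟩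
  obtain ⟨v, hv1, hv2⟩ := (mem_closure_iff.1 hxV) _ hnb hxnb
  obtain ⟨w, hwW₁, hwx⟩ := hv1
  have hxwV : x +ᵍ w ∈ V := by
    rw [show x +ᵍ w = v from hwx]
    exact hv2
  have hp : ((x +ᵍ w, w) : G × G) ∈ V ×ˢ W₁ := ⟨hxwV, hwW₁⟩
  have hmem := hsub hp
  simp only [Set.mem_preimage] at hmem
  rwa [gyro_star] at hmem

theorem exists_closure_subset_at (a : G) {W : Set G} (hWo : IsOpen W) (haW : a ∈ W) :
    ∃ V : Set G, IsOpen V ∧ Gyrogroup.zero ∈ V ∧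
      closure ((fun v => a +ᵍ v) '' V) ⊆ W := by
  have hW₀o : IsOpen ((fun v => a +ᵍ v) ⁻¹' W) :=
    hWo.preimage (cgadd continuous_const continuous_id)
  have h0W₀ : Gyrogroup.zero ∈ (fun v => a +ᵍ v) ⁻¹' W := by
    simp only [Set.mem_preimage, Gyrogroup.add_zero]
    exact haW
  obtain ⟨V, hVo, h0V, hVsub⟩ := exists_closure_subset hW₀o h0W₀
  refine ⟨V, hVo, h0V, ?_⟩
  have h1 : (fun v => a +ᵍ v) '' V = (lHomeo a) '' V := rfl
  rw [h1, ← (lHomeo a).image_closure]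
  rintro y ⟨v, hv, rfl⟩
  exact hVsub hv

theorem fiber_inter_compact (hH : IsStronglyLSubgyrogroup H) (hHc : IsClosed H)
    {U₀ K : Set G} (hUK : U₀ ∩ H ⊆ K) (hKc : IsCompact K)
    {B : Set G} (hB : ∀ m ∈ B, ∀ m' ∈ B, -ᵍm +ᵍ m' ∈ U₀)
    {N : Set G} (hNc : IsClosed N) (hNB : N ⊆ B)
    {x₀ : G} (hx₀ : x₀ ∈ N) :
    IsCompact (lCoset H x₀ ∩ N) := by
  apply IsCompact.of_isClosed_subset (hKc.image (lHomeo x₀).continuous)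
    ((isClosed_lCoset hHc x₀).inter hNc)
  rintro y ⟨hy1, hy2⟩
  have h1 : -ᵍx₀ +ᵍ y ∈ H := mem_lCoset_iff.1 hy1
  have h2 : -ᵍx₀ +ᵍ y ∈ U₀ := hB x₀ (hNB hx₀) y (hNB hy2)
  exact ⟨-ᵍx₀ +ᵍ y, hUK ⟨h2, h1⟩, left_cancel' x₀ y⟩


theorem key_compact (hH : IsStronglyLSubgyrogroup H) (hHc : IsClosed H)
    {U₀ K : Set G} (hUK : U₀ ∩ H ⊆ K) (hKc : IsCompact K)
    {B : Set G} (hBo : IsOpen B) (hB : ∀ m ∈ B, ∀ m' ∈ B, -ᵍm +ᵍ m' ∈ U₀)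
    {Ω W : Set G} (hΩo : IsOpen Ω) (h0Ω : Gyrogroup.zero ∈ Ω)
    (hΩW : ∀ ω ∈ Ω, ∀ w ∈ W, -ᵍω +ᵍ w ∈ B)
    {A : Set G} (hAo : IsOpen A) (hAW : A ⊆ W) (hNB : closure A ⊆ B)
    {L : Set (GyroQuot H)} (hLc : IsCompact L) :
    IsCompact (qmap H ⁻¹' L ∩ closure A) := by
  haveI hT2 : T2Space (GyroQuot H) := t2_gyroquot hH hHc
  set M := qmap H ⁻¹' L ∩ closure A with hM
  have hMc : IsClosed M := (hLc.isClosed.preimage (cont_qmap H)).inter isClosed_closure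
  rw [isCompact_iff_ultrafilter_le_nhds]
  intro F hFM
  have hMF : M ∈ F := by rwa [← Ultrafilter.mem_coe, ← Filter.le_principal_iff]
  obtain ⟨q, hqL, hq⟩ := hLc.ultrafilter_le_nhds (F.map (qmap H))
      (by
        rw [Filter.le_principal_iff, Ultrafilter.mem_coe, Ultrafilter.mem_map]
        exact Filter.mem_of_superset hMF fun y hy => hy.1)
  have hqclA : q ∈ closure (qmap H '' A) := by
    have h1 : qmap H '' M ∈ F.map (qmap H) := by
      rw [Ultrafilter.mem_map]
      exact Filter.mem_of_superset hMF fun y hy => Set.mem_preimage.2 ⟨y, hy, rfl⟩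
    have hsub : qmap H '' M ⊆ closure (qmap H '' A) := by
      rintro _ ⟨y, hy, rfl⟩
      exact (image_closure_subset_closure_image (cont_qmap H)) ⟨y, hy.2, rfl⟩
    have h2 : q ∈ closure (qmap H '' M) := by
      rw [mem_closure_iff_clusterPt]
      exact Filter.neBot_of_le (f := ↑(F.map (qmap H)))
        (le_inf hq (Filter.le_principal_iff.2 h1))
    have h3 := closure_mono hsub h2
    rwa [closure_closure] at h3
  obtain ⟨z, hzq⟩ := qmap_surj H q
  have hzcl : z ∈ closure (setAdd A H) := by
    rw [mem_closure_iff]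
    intro O hOo hzO
    have hq' : q ∈ qmap H '' O := ⟨z, hzO, hzq⟩
    obtain ⟨_, ⟨o, hoO, rfl⟩, a, haA, hqa⟩ :=
      mem_closure_iff.1 hqclA _ (isOpenMap_qmap hH O hOo) hq'
    obtain ⟨h, hhH, hah⟩ := (qmap_eq_iff hH).1 hqa
    exact ⟨o, hoO, mem_setAdd.2 ⟨a, haA, h, hhH, hah⟩⟩
  have hnb : IsOpen ((rHomeo z) '' Ω) := (rHomeo z).isOpenMap Ω hΩo
  have hznb : z ∈ (rHomeo z) '' Ω := ⟨Gyrogroup.zero, h0Ω, Gyrogroup.zero_add z⟩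
  obtain ⟨t, ht1, ht2⟩ := mem_closure_iff.1 hzcl _ hnb hznb
  obtain ⟨ω, hωΩ, hωz⟩ := ht1
  obtain ⟨a₀, ha₀, h₀, hh₀, hsum⟩ := mem_setAdd.1 ht2
  have hzdec : z = (-ᵍω +ᵍ a₀) +ᵍ γ (-ᵍω) a₀ h₀ := by
    have h1 : z = -ᵍω +ᵍ (a₀ +ᵍ h₀) := by
      rw [hsum, ← show ω +ᵍ z = t from hωz, left_cancel]
    rw [h1, Gyrogroup.gyrassoc]
  set b₀ := -ᵍω +ᵍ a₀ with hb₀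
  have hb₀B : b₀ ∈ B := hΩW ω hωΩ a₀ (hAW ha₀)
  have hqb₀ : qmap H b₀ = q := by
    rw [← hzq]
    exact (qmap_eq_iff hH).2 ⟨γ (-ᵍω) a₀ h₀, gyr_mem_H hH _ _ hh₀, hzdec.symm⟩
  have htrap : ∀ P : Set G, IsOpen P → b₀ ∈ P → P ⊆ B → setAdd P K ∈ F := by
    intro P hPo hb₀P hPB
    have h1 : qmap H '' P ∈ 𝓝 q := (isOpenMap_qmap hH P hPo).mem_nhds ⟨b₀, hb₀P, hqb₀⟩
    have h2 : qmap H ⁻¹' (qmap H '' P) ∈ F := by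
      have h3 := hq h1
      rwa [Ultrafilter.mem_coe, Ultrafilter.mem_map] at h3
    refine Filter.mem_of_superset (Filter.inter_mem hMF h2) ?_
    rintro y ⟨hyM, hyP⟩
    obtain ⟨p, hpP, hpq⟩ := hyP
    have hyH : -ᵍp +ᵍ y ∈ H := mem_lCoset_iff.1 ((qmap_eq_iff hH).1 hpq)
    have hyU : -ᵍp +ᵍ y ∈ U₀ := hB p (hPB hpP) y (hNB hyM.2)
    exact mem_setAdd.2 ⟨p, hpP, -ᵍp +ᵍ y, hUK ⟨hyU, hyH⟩, left_cancel' p y⟩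
  by_contra hcon
  push_neg at hcon
  set C₀ := (fun k => b₀ +ᵍ k) '' K with hC₀
  have hC₀c : IsCompact C₀ := hKc.image (cgadd continuous_const continuous_id)
  have hOx : ∀ x ∈ C₀, ∃ O : Set G, IsOpen O ∧ x ∈ O ∧ Oᶜ ∈ F := by
    intro x hx
    have hnle : ¬ (↑F ≤ 𝓝 x) := by
      intro hle
      have hxM : x ∈ M := by
        rw [← hMc.closure_eq, mem_closure_iff_clusterPt]
        exact Filter.neBot_of_le (f := ↑F)
          (le_inf hle (Filter.le_principal_iff.2 hMF))
      exact hcon x hxM hle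
    rw [Filter.le_def] at hnle
    push_neg at hnle
    obtain ⟨s, hs, hsF⟩ := hnle
    obtain ⟨O, hOs, hOo, hxO⟩ := mem_nhds_iff.1 hs
    refine ⟨O, hOo, hxO, ?_⟩
    rw [Ultrafilter.compl_mem_iff_notMem]
    exact fun hOF => hsF (Filter.mem_of_superset hOF hOs)
  choose! Ofn hOo hOmem hOcompl using hOx
  obtain ⟨b', hb'sub, hb'fin, hb'cov⟩ := hC₀c.elim_finite_subcover_image
    (fun x hx => hOo x hx) (fun x hx => Set.mem_biUnion hx (hOmem x hx))
  set O := ⋃ i ∈ b', Ofn i with hO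
  have hOopen : IsOpen O := isOpen_biUnion fun i hi => hOo i (hb'sub hi)
  have hOnotF : O ∉ F := by
    have hcompl : Oᶜ ∈ F := by
      have : Oᶜ = ⋂ i ∈ b', (Ofn i)ᶜ := by
        simp [hO, Set.compl_iUnion]
      rw [this]
      exact (Filter.biInter_mem hb'fin).2 fun i hi => hOcompl i (hb'sub hi)
    rw [← Ultrafilter.compl_mem_iff_notMem]
    exact hcompl
  have htube : ∃ P : Set G, IsOpen P ∧ b₀ ∈ P ∧ P ⊆ B ∧ setAdd P K ⊆ O := by
    have hpre : ∀ k ∈ K, ∃ Pk Qk : Set G, IsOpen Pk ∧ IsOpen Qk ∧ b₀ ∈ Pk ∧ k ∈ Qk ∧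
        ∀ p ∈ Pk, ∀ k' ∈ Qk, p +ᵍ k' ∈ O := by
      intro k hk
      have hbkO : b₀ +ᵍ k ∈ O := hb'cov ⟨k, hk, rfl⟩
      have hopre : IsOpen ((fun p : G × G => p.1 +ᵍ p.2) ⁻¹' O) := hOopen.preimage cont_gadd
      obtain ⟨Pk, Qk, hPko, hQko, hbPk, hkQk, hPQ⟩ := isOpen_prod_iff.1 hopre b₀ k hbkO
      exact ⟨Pk, Qk, hPko, hQko, hbPk, hkQk, fun p hp k' hk' => hPQ (Set.mk_mem_prod hp hk')⟩
    choose! Pf Qf hPo' hQo' hbP' hkQ' hPQ' using hpre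
    obtain ⟨tK, htKsub, htKfin, htKcov⟩ := hKc.elim_finite_subcover_image
      (fun k hk => hQo' k hk) (fun k hk => Set.mem_biUnion hk (hkQ' k hk))
    refine ⟨B ∩ ⋂ k ∈ tK, Pf k, hBo.inter (htKfin.isOpen_biInter fun k hk => hPo' k (htKsub hk)),
      ⟨hb₀B, Set.mem_iInter₂.2 fun k hk => hbP' k (htKsub hk)⟩, fun y hy => hy.1, ?_⟩
    rintro _ ⟨p, hp, k, hkK, rfl⟩
    obtain ⟨ki, hkitK, hkQ⟩ := Set.mem_iUnion₂.1 (htKcov hkK)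
    exact hPQ' ki (htKsub hkitK) p (Set.mem_iInter₂.1 hp.2 ki hkitK) k hkQ
  obtain ⟨P, hPo, hbP, hPB, hPO⟩ := htube
  exact hOnotF (Filter.mem_of_superset (htrap P hPo hbP hPB) hPO)

theorem master (hH : IsStronglyLSubgyrogroup H) (hlc : LocallyCompactSpace H)
    (hk : IsKSpace (GyroQuot H)) {S : Set G}
    (hS : ∀ C : Set G, IsCompact C → IsClosed (S ∩ C)) : IsClosed S := by
  have hHc := isClosed_of_locallyCompact hH hlc
  haveI hT2q := t2_gyroquot hH hHc
  rw [← closure_subset_iff_isClosed]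
  intro x hx
  by_contra hxS
  obtain ⟨K, U₀, hKH, hKc, hU₀o, h0U₀, hUK⟩ := exists_compact_nbhd hH hlc
  have hcB : Continuous fun p : G × G => -ᵍp.1 +ᵍ p.2 :=
    cgadd (cgneg continuous_fst) continuous_snd
  have hvalB : -ᵍx +ᵍ x ∈ U₀ := by rw [Gyrogroup.neg_add]; exact h0U₀
  obtain ⟨B₁, B₂, hB₁o, hB₂o, hxB₁, hxB₂, hBsub⟩ :=
    isOpen_prod_iff.1 (hU₀o.preimage hcB) x x hvalB
  set B := B₁ ∩ B₂ with hBdef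
  have hBo : IsOpen B := hB₁o.inter hB₂o
  have hxB : x ∈ B := ⟨hxB₁, hxB₂⟩
  have hB : ∀ m ∈ B, ∀ m' ∈ B, -ᵍm +ᵍ m' ∈ U₀ := fun m hm m' hm' =>
    hBsub (Set.mk_mem_prod hm.1 hm'.2)
  have hvalΩ : -ᵍ(Gyrogroup.zero : G) +ᵍ x ∈ B := by
    rw [gneg_zero, Gyrogroup.zero_add]; exact hxB
  obtain ⟨Ω, W, hΩo, hWo, h0Ω, hxW, hΩWsub⟩ :=
    isOpen_prod_iff.1 (hBo.preimage hcB) _ x hvalΩ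
  have hΩW : ∀ ω ∈ Ω, ∀ w ∈ W, -ᵍω +ᵍ w ∈ B := fun ω hω w hw =>
    hΩWsub (Set.mk_mem_prod hω hw)
  obtain ⟨V, hVo, h0V, hclsub⟩ := exists_closure_subset_at x (hWo.inter hBo) ⟨hxW, hxB⟩
  set A := (fun v => x +ᵍ v) '' V with hA
  have hAo : IsOpen A := (lHomeo x).isOpenMap V hVo
  have hxA : x ∈ A := ⟨Gyrogroup.zero, h0V, Gyrogroup.add_zero x⟩
  set N := closure A with hN
  have hNW : N ⊆ W ∩ B := hclsub
  have hAW : A ⊆ W := fun a ha => (hNW (subset_closure ha)).1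
  have hNB : N ⊆ B := fun a ha => (hNW ha).2
  have hPc : IsCompact (lCoset H x ∩ N) :=
    fiber_inter_compact hH hHc hUK hKc hB isClosed_closure hNB (subset_closure hxA)
  have hSPclosed : IsClosed (S ∩ (lCoset H x ∩ N)) := hS _ hPc
  have hSP : IsCompact (S ∩ (lCoset H x ∩ N)) :=
    IsCompact.of_isClosed_subset hPc hSPclosed Set.inter_subset_right
  have hux : x ∉ S ∩ (lCoset H x ∩ N) := fun h => hxS h.1
  obtain ⟨U₁, V₁, hU₁o, hV₁o, hxU₁, hSPV₁, hdisj⟩ :=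
    SeparatedNhds.of_isCompact_isCompact isCompact_singleton hSP
      (Set.disjoint_singleton_left.2 hux)
  have hxU₁' : x ∈ U₁ := hxU₁ rfl
  have hclU₁ : closure U₁ ∩ (S ∩ (lCoset H x ∩ N)) = ∅ := by
    have hU₁V₁ : U₁ ⊆ V₁ᶜ := fun u hu huV₁ => Set.disjoint_left.1 hdisj hu huV₁
    have hcl : closure U₁ ⊆ V₁ᶜ := closure_minimal hU₁V₁ (isClosed_compl_iff.2 hV₁o)
    rw [Set.eq_empty_iff_forall_notMem]
    rintro y ⟨h1, h2⟩
    exact hcl h1 (hSPV₁ h2)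
  set A' := S ∩ closure U₁ ∩ N with hA'
  have hA'N : A' ⊆ N := fun y hy => hy.2
  have hπA' : IsClosed (qmap H '' A') := by
    apply hk
    intro L hLc2
    have hMLc : IsCompact (qmap H ⁻¹' L ∩ N) :=
      key_compact hH hHc hUK hKc hBo hB hΩo h0Ω hΩW hAo hAW hNB hLc2
    have hA'ML : A' ∩ (qmap H ⁻¹' L ∩ N) = (S ∩ (qmap H ⁻¹' L ∩ N)) ∩ closure U₁ := by
      ext y
      simp only [hA', Set.mem_inter_iff]
      tauto
    have hclosed2 : IsClosed (A' ∩ (qmap H ⁻¹' L ∩ N)) := by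
      rw [hA'ML]
      exact (hS _ hMLc).inter isClosed_closure
    have hcpt2 : IsCompact (A' ∩ (qmap H ⁻¹' L ∩ N)) :=
      IsCompact.of_isClosed_subset hMLc hclosed2 Set.inter_subset_right
    have hEcl : IsClosed (qmap H '' (A' ∩ (qmap H ⁻¹' L ∩ N))) :=
      (hcpt2.image (cont_qmap H)).isClosed
    have heq : (Subtype.val ⁻¹' (qmap H '' A') : Set L)
        = Subtype.val ⁻¹' (qmap H '' (A' ∩ (qmap H ⁻¹' L ∩ N))) := by
      ext ⟨l, hl⟩
      simp only [Set.mem_preimage]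
      constructor
      · rintro ⟨a, ha, hqa⟩
        exact ⟨a, ⟨ha, ⟨by rw [Set.mem_preimage, hqa]; exact hl, hA'N ha⟩⟩, hqa⟩
      · rintro ⟨a, ha, hqa⟩
        exact ⟨a, ha.1, hqa⟩
    rw [heq]
    exact hEcl.preimage continuous_subtype_val
  have hxclA' : qmap H x ∈ qmap H '' A' := by
    have hxcl : x ∈ closure A' := by
      rw [mem_closure_iff]
      intro o hoo hxo
      obtain ⟨y, hy1, hy2⟩ := mem_closure_iff.1 hx (o ∩ U₁ ∩ A)
        ((hoo.inter hU₁o).inter hAo) ⟨⟨hxo, hxU₁'⟩, hxA⟩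
      exact ⟨y, hy1.1.1, ⟨hy2, subset_closure hy1.1.2⟩, subset_closure hy1.2⟩
    have h1 : qmap H x ∈ closure (qmap H '' A') :=
      (image_closure_subset_closure_image (cont_qmap H)) ⟨x, hxcl, rfl⟩
    rwa [hπA'.closure_eq] at h1
  obtain ⟨a, haA', hqa⟩ := hxclA'
  have haP : a ∈ lCoset H x := (qmap_eq_iff hH).1 hqa.symm
  have hmem : a ∈ closure U₁ ∩ (S ∩ (lCoset H x ∩ N)) :=
    ⟨haA'.1.2, haA'.1.1, haP, haA'.2⟩
  rw [hclU₁] at hmem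
  exact hmem

end Stmt17Aux

/-- If `H` is a locally compact strongly L-subgyrogroup of a Hausdorff
topological gyrogroup `G` and the quotient space `G/H` is a k-space, then `G` is a
k-space. -/
theorem stmt_17 {G : Type u} [Gyrogroup G] [TopologicalSpace G] [TopologicalGyrogroup G]
    [T2Space G] (H : Set G) (hH : IsStronglyLSubgyrogroup H)
    (hlc : LocallyCompactSpace H) (hk : IsKSpace (GyroQuot H)) :
    IsKSpace G := by
  intro S hS
  apply master hH hlc hk
  intro C hC
  have h1 := hS C hC
  rw [isClosed_induced_iff] at h1
  obtain ⟨T, hTc, hTe⟩ := h1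
  have hSC : S ∩ C = T ∩ C := by
    ext y
    constructor
    · rintro ⟨hyS, hyC⟩
      have h2 : (⟨y, hyC⟩ : C) ∈ Subtype.val ⁻¹' T := by
        rw [hTe]; exact hyS
      exact ⟨h2, hyC⟩
    · rintro ⟨hyT, hyC⟩
      have h2 : (⟨y, hyC⟩ : C) ∈ Subtype.val ⁻¹' S := by
        rw [← hTe]; exact hyT
      exact ⟨h2, hyC⟩
  rw [hSC]
  exact hTc.inter hC.isClosed
end

section
/- Let G be a Hausdorff zero-dimensional topological gyrogroup (i.e. G has a base of sets that are both open and closed) and let H be a locally compact strongly L-subgyrogroup of G. Then the quotient space G/H is zero-dimensional. -/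
universe u

/-- A zero-dimensional space: one having a base consisting of clopen sets. -/
def IsZeroDimensional (X : Type*) [TopologicalSpace X] : Prop :=
  ∃ B : Set (Set X), (∀ U ∈ B, IsClopen U) ∧ TopologicalSpace.IsTopologicalBasis B

/-! The quotient map `π : G → G/H` is open, so for a clopen `V` the set `π(V)` is clopen as soon
as its saturation `π⁻¹(π(V)) = {x | ∃ h ∈ H, x ⊕ h ∈ V}` is closed, and this holds whenever `V` is
closed and small. Fix a compact `K ⊆ H` which is a neighbourhood of `0` in `H`. Near a point `z`
of the closure of the saturation, pick `x₀` in it with `x₀ ⊟ z` small and `p ∈ V ∩ (x₀ ⊕ H)`.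
Then `c(x) = ⊖(x₀ ⊟ x) ⊕ p` depends continuously on `x` and lies in the coset `x ⊕ H`, and for
`x` near `z` every `q ∈ V ∩ (x ⊕ H)` is `c(x) ⊕ k` with `k ∈ H` close to `0`, hence `k ∈ K`. So
near `z` the saturation coincides with the set of `x` for which `c(x) ⊕ K` meets `V`, which is
closed because `K` is compact. -/

open Topology

theorem isClosed_setOf_exists_mem_of_isCompact {X Y Z : Type*} [TopologicalSpace X]
    [TopologicalSpace Y] [TopologicalSpace Z] {f : X → Y → Z}
    (hf : Continuous (Function.uncurry f)) {K : Set Y} (hK : IsCompact K) {V : Set Z}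
    (hV : IsClosed V) : IsClosed {x | ∃ k ∈ K, f x k ∈ V} := by
  have : CompactSpace K := isCompact_iff_compactSpace.mp hK
  have hproj : {x | ∃ k ∈ K, f x k ∈ V} = Prod.fst '' {p : X × K | f p.1 p.2 ∈ V} := by
    ext x
    simp
  rw [hproj]
  exact isClosedMap_fst_of_compactSpace _ (hV.preimage (by fun_prop))

theorem exists_isCompact_isOpen_inter_subset {X : Type*} [TopologicalSpace X] {H : Set X}
    [WeaklyLocallyCompactSpace H] {a : X} (ha : a ∈ H) :
    ∃ K U : Set X, IsCompact K ∧ K ⊆ H ∧ IsOpen U ∧ a ∈ U ∧ U ∩ H ⊆ K := by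
  obtain ⟨t, htc, ht⟩ := exists_compact_mem_nhds (⟨a, ha⟩ : H)
  obtain ⟨u, hu, hut⟩ := (mem_nhds_subtype H _ t).mp ht
  obtain ⟨U, hUu, hU, haU⟩ := mem_nhds_iff.mp hu
  refine ⟨Subtype.val '' t, U, htc.image continuous_subtype_val, Subtype.coe_image_subset H t,
    hU, haU, fun y ⟨hyU, hyH⟩ => ⟨⟨y, hyH⟩, hut (hUu hyU), rfl⟩⟩

section

local instance {G : Type u} [Gyrogroup G] : Add G := ⟨Gyrogroup.add⟩
local instance {G : Type u} [Gyrogroup G] : Neg G := ⟨Gyrogroup.neg⟩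
local instance {G : Type u} [Gyrogroup G] : Zero G := ⟨Gyrogroup.zero⟩
local instance {G : Type u} [Gyrogroup G] [TopologicalSpace G] [TopologicalGyrogroup G] :
    ContinuousAdd G := ⟨TopologicalGyrogroup.continuous_add⟩
local instance {G : Type u} [Gyrogroup G] [TopologicalSpace G] [TopologicalGyrogroup G] :
    ContinuousNeg G := ⟨TopologicalGyrogroup.continuous_neg⟩

namespace Gyrogroup

variable {G : Type u} [Gyrogroup G]

theorem zero_add' (a : G) : 0 + a = a := Gyrogroup.zero_add a
theorem add_zero' (a : G) : a + 0 = a := Gyrogroup.add_zero a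
theorem neg_add' (a : G) : -a + a = 0 := Gyrogroup.neg_add a
theorem add_neg' (a : G) : a + -a = 0 := Gyrogroup.add_neg a
theorem gyr_add' (a b x y : G) : gyr a b (x + y) = gyr a b x + gyr a b y :=
  Gyrogroup.gyr_add a b x y
theorem gyrassoc' (a b z : G) : a + (b + z) = (a + b) + gyr a b z := Gyrogroup.gyrassoc a b z
theorem loop' (a b : G) : gyr (a + b) b = gyr a b := Gyrogroup.loop a b

theorem add_left_cancel {a x y : G} (h : a + x = a + y) : x = y := by
  have h' := congrArg (-a + ·) h
  simp only [gyrassoc', neg_add', zero_add'] at h'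
  exact (gyr_bijective _ _).1 h'

theorem gyr_zero_left (b z : G) : gyr 0 b z = z := by
  have h := gyrassoc' 0 b z
  rw [zero_add', zero_add'] at h
  exact (add_left_cancel h).symm

theorem gyr_neg_self (a z : G) : gyr (-a) a z = z := by
  rw [← loop', neg_add', gyr_zero_left]

theorem gyr_self_neg (a z : G) : gyr a (-a) z = z := by
  rw [← loop', add_neg', gyr_zero_left]

theorem gyr_self (a z : G) : gyr a a z = z := by
  have h := congrFun (loop' 0 a) z
  rwa [zero_add', gyr_zero_left] at h

theorem neg_add_cancel_left (a x : G) : -a + (a + x) = x := by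
  rw [gyrassoc', neg_add', zero_add', gyr_neg_self]

theorem add_neg_cancel_left (a x : G) : a + (-a + x) = x := by
  rw [gyrassoc', add_neg', zero_add', gyr_self_neg]

theorem eq_neg_of_add_eq_zero {x y : G} (h : x + y = 0) : y = -x := by
  rw [← neg_add_cancel_left x y, h, add_zero']

theorem neg_neg (a : G) : -(-a) = a :=
  (eq_neg_of_add_eq_zero (neg_add' a)).symm

theorem neg_zero : -(0 : G) = 0 :=
  (eq_neg_of_add_eq_zero (zero_add' 0)).symm

theorem gyr_zero (a b : G) : gyr a b 0 = 0 := by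
  apply add_left_cancel (a := a + b)
  rw [← gyrassoc', add_zero', add_zero']

theorem neg_add_eq_gyr (a b : G) : -(a + b) = gyr a b (-b + -a) := by
  refine (eq_neg_of_add_eq_zero ?_).symm
  rw [← gyrassoc', add_neg_cancel_left, add_neg']

theorem gyr_eq (a b z : G) : gyr a b z = -(a + b) + (a + (b + z)) := by
  rw [gyrassoc' a b z, neg_add_cancel_left]

theorem neg_add_add_eq_gyr (p a b : G) : -(p + a) + (p + b) = gyr p a (-a + b) := by
  conv_lhs => rw [← add_neg_cancel_left a b, gyrassoc' p a, neg_add_cancel_left]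

theorem gyr_neg_neg_gyr (a b z : G) : gyr (-b) (-a) (gyr a b z) = z := by
  have hab : gyr (-b) (-a) (a + b) = -(-b + -a) := by
    rw [neg_add_eq_gyr, neg_neg, neg_neg]
  have h : -b + (-a + ((a + b) + gyr a b z)) = z := by
    rw [← gyrassoc', neg_add_cancel_left, neg_add_cancel_left]
  rwa [gyrassoc', gyr_add', hab, add_neg_cancel_left] at h

theorem gyr_gyr_neg_neg (a b z : G) : gyr a b (gyr (-b) (-a) z) = z := by
  simpa only [neg_neg] using gyr_neg_neg_gyr (-b) (-a) z

theorem gyr_neg_add_gyr (a b z : G) : gyr (-a) (a + b) (gyr a b z) = z := by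
  rw [gyr_eq (-a) (a + b), neg_add_cancel_left, ← gyrassoc', neg_add_cancel_left,
    neg_add_cancel_left]

theorem gyr_neg_add_left (a b : G) : gyr (-(a + b)) a = gyr a b := by
  funext z
  calc gyr (-(a + b)) a z = gyr (-(a + b)) a (gyr (-a) (a + b) (gyr a b z)) := by
        rw [gyr_neg_add_gyr]
    _ = gyr a b z := by simpa only [neg_neg] using gyr_neg_neg_gyr (-a) (a + b) (gyr a b z)

/-- `b ⊟ a`, the solution `x` of `x ⊕ a = b`. -/
def rightSub (b a : G) : G := b + gyr b a (-a)

theorem rightSub_add (b a : G) : rightSub b a + a = b := by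
  have hb : (b + a) + gyr b a (-a) = b := by rw [← gyrassoc', add_neg', add_zero']
  have hloop : gyr b (gyr b a (-a)) = gyr (b + a) (gyr b a (-a)) := by
    simpa only [hb] using loop' (b + a) (gyr b a (-a))
  have hn : gyr b a (-a) = -(b + a) + b := by
    rw [← neg_add_cancel_left (b + a) (gyr b a (-a)), hb]
  have hgyr : gyr b (gyr b a (-a)) (gyr b a a) = a := by
    rw [hloop, hn, ← gyr_neg_add_left b a]
    simpa only [neg_neg] using gyr_neg_add_gyr (-(b + a)) b a
  calc rightSub b a + a = b + (gyr b a (-a) + gyr b a a) := by rw [gyrassoc', hgyr]; rfl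
    _ = b := by rw [← gyr_add', neg_add', gyr_zero, add_zero']

theorem rightSub_self (a : G) : rightSub a a = 0 := by
  rw [rightSub, gyr_self, add_neg']

theorem neg_add_eq_add_gyr (e x p : G) : -e + p = x + gyr (-x) (-e) (-(e + x) + p) :=
  calc -e + p = -e + (e + (x + gyr (-x) (-e) (-(e + x) + p))) := by
        rw [gyrassoc' e x, gyr_gyr_neg_neg, add_neg_cancel_left]
    _ = x + gyr (-x) (-e) (-(e + x) + p) := neg_add_cancel_left _ _

variable {H : Set G}

theorem _root_.IsSubgyrogroup.zero_mem (hH : IsSubgyrogroup H) : (0 : G) ∈ H := by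
  obtain ⟨a, ha⟩ := hH.nonempty
  have h : -a + a ∈ H := hH.add_mem (hH.neg_mem ha) ha
  rwa [neg_add'] at h

theorem _root_.IsSubgyrogroup.neg_add_mem_iff (hH : IsSubgyrogroup H) {a x : G} (ha : a ∈ H) :
    -a + x ∈ H ↔ x ∈ H :=
  ⟨fun hx => add_neg_cancel_left a x ▸ hH.add_mem ha hx,
    fun hx => hH.add_mem (hH.neg_mem ha) hx⟩

theorem _root_.IsStronglyLSubgyrogroup.gyr_mem (hH : IsStronglyLSubgyrogroup H) (a b : G)
    {h : G} (hh : h ∈ H) : gyr a b h ∈ H :=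
  hH.gyr_image_subset a b ⟨h, hh, rfl⟩

theorem _root_.IsStronglyLSubgyrogroup.gyr_mem_iff (hH : IsStronglyLSubgyrogroup H)
    {a b h : G} : gyr a b h ∈ H ↔ h ∈ H :=
  ⟨fun hh => gyr_neg_neg_gyr a b h ▸ hH.gyr_mem _ _ hh, hH.gyr_mem a b⟩

theorem mem_lCoset_iff {x y : G} : y ∈ lCoset H x ↔ -x + y ∈ H := by
  constructor
  · rintro ⟨h, hh, rfl⟩
    show -x + (x + h) ∈ H
    rwa [neg_add_cancel_left]
  · exact fun hy => ⟨-x + y, hy, add_neg_cancel_left x y⟩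

theorem lCoset_add_of_mem (hH : IsStronglyLSubgyrogroup H) {a : G} (ha : a ∈ H) (x : G) :
    lCoset H (x + a) = lCoset H x := by
  ext z
  rw [mem_lCoset_iff, mem_lCoset_iff, ← add_neg_cancel_left x z, neg_add_add_eq_gyr,
    neg_add_cancel_left, hH.gyr_mem_iff, hH.neg_add_mem_iff ha]

theorem qmap_eq_qmap_iff (hH : IsStronglyLSubgyrogroup H) {x y : G} :
    qmap H x = qmap H y ↔ -x + y ∈ H := by
  refine Quotient.eq.trans ⟨fun hxy => ?_, fun hxy => ?_⟩
  · have hy : y ∈ lCoset H y := ⟨0, hH.zero_mem, add_zero' y⟩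
    exact mem_lCoset_iff.1 (hxy ▸ hy)
  · show lCoset H x = lCoset H y
    rw [← add_neg_cancel_left x y, lCoset_add_of_mem hH hxy]

theorem qmap_add_of_mem (hH : IsStronglyLSubgyrogroup H) {h : G} (hh : h ∈ H) (x : G) :
    qmap H (x + h) = qmap H x :=
  ((qmap_eq_qmap_iff hH).2 (by rwa [neg_add_cancel_left])).symm

theorem mem_preimage_qmap_image_iff (hH : IsStronglyLSubgyrogroup H) {A : Set G} {x : G} :
    x ∈ qmap H ⁻¹' (qmap H '' A) ↔ ∃ h ∈ H, x + h ∈ A := by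
  constructor
  · rintro ⟨a, ha, hax⟩
    exact ⟨-x + a, (qmap_eq_qmap_iff hH).1 hax.symm, by rwa [add_neg_cancel_left]⟩
  · rintro ⟨h, hh, hA⟩
    exact ⟨x + h, hA, qmap_add_of_mem hH hh x⟩

section Topology

variable [TopologicalSpace G]

theorem isQuotientMap_qmap : IsQuotientMap (qmap H) := isQuotientMap_quotient_mk'

variable [TopologicalGyrogroup G]

@[fun_prop]
theorem _root_.Continuous.gyr {X : Type*} [TopologicalSpace X] {f g k : X → G}
    (hf : Continuous f) (hg : Continuous g) (hk : Continuous k) :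
    Continuous fun x => gyr (f x) (g x) (k x) := by
  simp only [gyr_eq]
  fun_prop

@[fun_prop]
theorem _root_.Continuous.rightSub {X : Type*} [TopologicalSpace X] {f g : X → G}
    (hf : Continuous f) (hg : Continuous g) : Continuous fun x => rightSub (f x) (g x) := by
  unfold Gyrogroup.rightSub
  fun_prop

theorem isOpenMap_qmap (hH : IsStronglyLSubgyrogroup H) : IsOpenMap (qmap H) := by
  intro U hU
  have hsat : qmap H ⁻¹' (qmap H '' U) = ⋃ h ∈ H, (· + h) ⁻¹' U := by
    ext x
    simp only [mem_preimage_qmap_image_iff hH, Set.mem_iUnion, Set.mem_preimage, exists_prop]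
  rw [← isQuotientMap_qmap.isOpen_preimage, hsat]
  exact isOpen_biUnion fun h _ => hU.preimage (by fun_prop)

theorem exists_isOpen_forall_neg_neg_add_add_add_mem {U : Set G} (hU : IsOpen U)
    (h0 : 0 ∈ U) (x : G) : ∃ W V : Set G, IsOpen W ∧ 0 ∈ W ∧ IsOpen V ∧ x ∈ V ∧
      ∀ e ∈ W, ∀ p ∈ V, ∀ q ∈ V, -(-e + p) + q ∈ U := by
  have hf : (fun t : G × G × G => -(-t.1 + t.2.1) + t.2.2) ⁻¹' U ∈ 𝓝 (0, x, x) := by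
    refine (hU.preimage (by fun_prop)).mem_nhds ?_
    simpa only [Set.mem_preimage, neg_zero, zero_add', neg_add'] using h0
  obtain ⟨W, P, hW, h0W, hP, hxP, hWP⟩ := mem_nhds_prod_iff'.1 hf
  obtain ⟨V₁, V₂, hV₁, hxV₁, hV₂, hxV₂, hV⟩ := mem_nhds_prod_iff'.1 (hP.mem_nhds hxP)
  refine ⟨W, V₁ ∩ V₂, hW, h0W, hV₁.inter hV₂, ⟨hxV₁, hxV₂⟩, fun e he p hp q hq => ?_⟩
  exact hWP (Set.mk_mem_prod he (hV (Set.mk_mem_prod hp.1 hq.2)))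

theorem isClosed_preimage_qmap_image (hH : IsStronglyLSubgyrogroup H) {K U W V : Set G}
    (hK : IsCompact K) (hKH : K ⊆ H) (hUK : U ∩ H ⊆ K) (hW : IsOpen W) (h0W : 0 ∈ W)
    (hV : IsClosed V) (hsmall : ∀ e ∈ W, ∀ p ∈ V, ∀ q ∈ V, -(-e + p) + q ∈ U) :
    IsClosed (qmap H ⁻¹' (qmap H '' V)) := by
  refine isClosed_of_closure_subset fun z hz => ?_
  obtain ⟨x₀, hx₀W, p, hpV, hp⟩ := mem_closure_iff.1 hz ((rightSub · z) ⁻¹' W)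
    (hW.preimage (by fun_prop)) (by simpa only [Set.mem_preimage, rightSub_self] using h0W)
  set N := (fun x => rightSub x₀ x) ⁻¹' W
  have hN : IsOpen N := hW.preimage (by fun_prop)
  set c : G → G := fun x => -rightSub x₀ x + p
  have hcoset : ∀ x, qmap H (c x) = qmap H x := fun x => by
    have hx₀p : -(rightSub x₀ x + x) + p ∈ H := by
      rw [rightSub_add]
      exact (qmap_eq_qmap_iff hH).1 hp.symm
    simp only [c]
    rw [neg_add_eq_add_gyr _ x, qmap_add_of_mem hH (hH.gyr_mem _ _ hx₀p)]
  set T := c ⁻¹' {y | ∃ k ∈ K, y + k ∈ V}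
  have hT : IsClosed T :=
    (isClosed_setOf_exists_mem_of_isCompact (f := (· + ·)) (by fun_prop) hK hV).preimage
      (by fun_prop)
  have hTS : T ⊆ qmap H ⁻¹' (qmap H '' V) := fun x ⟨k, hk, hkV⟩ =>
    ⟨c x + k, hkV, by rw [qmap_add_of_mem hH (hKH hk), hcoset]⟩
  have hNT : N ∩ qmap H ⁻¹' (qmap H '' V) ⊆ T := by
    rintro x ⟨hxN, q, hqV, hq⟩
    have hk : -c x + q ∈ H := (qmap_eq_qmap_iff hH).1 (by rw [hcoset, hq])
    exact ⟨-c x + q, hUK ⟨hsmall _ hxN p hpV q hqV, hk⟩, by rwa [add_neg_cancel_left]⟩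
  exact hTS (hT.closure_subset_iff.2 hNT (hN.inter_closure ⟨hx₀W, hz⟩))

end Topology

end Gyrogroup

end

theorem stmt_18_general {G : Type u} [Gyrogroup G] [TopologicalSpace G] [TopologicalGyrogroup G]
    (hzd : IsZeroDimensional G) (H : Set G)
    (hH : IsStronglyLSubgyrogroup H) (hlc : LocallyCompactSpace H) :
    IsZeroDimensional (GyroQuot H) := by
  obtain ⟨B, hBclopen, hB⟩ := hzd
  obtain ⟨K, U, hK, hKH, hU, h0U, hUK⟩ := exists_isCompact_isOpen_inter_subset hH.zero_mem
  refine ⟨{C | IsClopen C}, fun _ hC => hC,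
    TopologicalSpace.isTopologicalBasis_of_isOpen_of_nhds (fun _ hC => hC.isOpen) ?_⟩
  intro q O hqO hO
  obtain ⟨x, rfl⟩ : ∃ x, qmap H x = q := Quotient.exists_rep q
  obtain ⟨W, V₀, hW, h0W, hV₀, hxV₀, hsmall⟩ :=
    Gyrogroup.exists_isOpen_forall_neg_neg_add_add_add_mem hU h0U x
  obtain ⟨V, hVB, hxV, hVsub⟩ := hB.exists_subset_of_mem_open (Set.mem_inter hxV₀ hqO)
    (hV₀.inter (hO.preimage Gyrogroup.isQuotientMap_qmap.continuous))
  have hVclopen := hBclopen V hVB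
  refine ⟨qmap H '' V, ⟨?_, Gyrogroup.isOpenMap_qmap hH V hVclopen.isOpen⟩, ⟨x, hxV, rfl⟩,
    Set.image_subset_iff.2 fun v hv => (hVsub hv).2⟩
  exact Gyrogroup.isQuotientMap_qmap.isClosed_preimage.1
    (Gyrogroup.isClosed_preimage_qmap_image hH hK hKH hUK hW h0W hVclopen.isClosed
      fun e he p hp q hq => hsmall e he p (hVsub hp).1 q (hVsub hq).1)

/-- If `G` is a Hausdorff zero-dimensional topological gyrogroup and `H`
is a locally compact strongly L-subgyrogroup, then `G/H` is zero-dimensional. -/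
theorem stmt_18 {G : Type u} [Gyrogroup G] [TopologicalSpace G] [TopologicalGyrogroup G]
    [T2Space G] (hzd : IsZeroDimensional G) (H : Set G)
    (hH : IsStronglyLSubgyrogroup H) (hlc : LocallyCompactSpace H) :
    IsZeroDimensional (GyroQuot H) :=
  stmt_18_general hzd H hH hlc
end
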